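/- For each integer m > 0, the vector ψ_m = (m/2) Σ_{k=0}^∞ (Γ(k + m/2) / √(k!(k+m)!)) |k+m⟩⊗|k⟩ in ℓ²(ℕ)⊗ℓ²(ℕ) is a unit vector, i.e., (m²/4) Σ_{k=0}^∞ Γ(k+m/2)² / (k!(k+m)!) = 1. -/

import Mathlib

/-!
With `a = m / 2`, the squared coefficients are `a² Γ(k+a)² / (Γ(k+1) Γ(k+1+2a))`, and their
partial sums telescope: for `V N = N (N+2a) Γ(N+a)² / (Γ(N+1) Γ(N+1+2a))` one has
`V (k+1) - V k = ((k+a)² - k (k+2a)) Γ(k+a)² / (Γ(k+1) Γ(k+1+2a))`,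
and `(k+a)² - k (k+2a) = a²`.
Since `V N = Γ(N+a)² / (Γ N Γ(N+2a))` for `N ≥ 1`, Euler's limit formula `Γ(N+a) ~ Γ(N) N^a`
gives `V N → 1`.
-/

open scoped InnerProductSpace

noncomputable section

/-- The two-mode Hilbert space `ℓ²(ℕ) ⊗ ℓ²(ℕ) ≅ ℓ²(ℕ × ℕ)`. -/
abbrev H2 : Type := lp (fun _ : ℕ × ℕ => ℂ) 2

open Filter Finset Topology

namespace Real

theorem Gamma_add_nat_eq_mul_prod {a : ℝ} (ha : ∀ k : ℕ, a ≠ -k) (n : ℕ) :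
    Gamma (a + n) = Gamma a * ∏ j ∈ range n, (a + j) := by
  induction n with
  | zero => simp
  | succ n ih =>
    have hne : a + n ≠ 0 := fun h => ha n (by linarith)
    rw [Nat.cast_succ, ← add_assoc, Gamma_add_one hne, ih, prod_range_succ]
    ring

theorem Gamma_div_GammaSeq_eq {a : ℝ} (ha : ∀ k : ℕ, a ≠ -k) {n : ℕ} (hn : n ≠ 0) :
    Gamma a / GammaSeq a n = (n + a) / n * (Gamma (n + a) / (Gamma n * (n : ℝ) ^ a)) := by
  have hn' : (n : ℝ) ≠ 0 := Nat.cast_ne_zero.mpr hn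
  have hfact : (n.factorial : ℝ) = n * Gamma n := by
    rw [← Gamma_nat_eq_factorial, Gamma_add_one hn']
  rw [GammaSeq, prod_range_succ, hfact, add_comm (n : ℝ) a, Gamma_add_nat_eq_mul_prod ha]
  field_simp

theorem tendsto_Gamma_nat_add_div_mul_rpow {a : ℝ} (ha : ∀ k : ℕ, a ≠ -k) :
    Tendsto (fun n : ℕ => Gamma (n + a) / (Gamma n * (n : ℝ) ^ a)) atTop (𝓝 1) := by
  have hΓ : Tendsto (fun n => Gamma a / GammaSeq a n) atTop (𝓝 1) := by
    simpa only [div_self (Gamma_ne_zero ha), Pi.div_def] using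
      (tendsto_const_nhds (x := Gamma a)).div (GammaSeq_tendsto_Gamma a) (Gamma_ne_zero ha)
  have := (tendsto_natCast_div_add_atTop a).mul hΓ
  rw [one_mul] at this
  refine this.congr' ?_
  filter_upwards [eventually_ne_atTop 0] with n hn
  have hna : (n : ℝ) + a ≠ 0 := fun h => ha n (by linarith)
  rw [Gamma_div_GammaSeq_eq ha hn]
  field_simp

theorem ne_neg_natCast_of_pos {a : ℝ} (ha : 0 < a) (k : ℕ) : a ≠ -k :=
  fun h => by linarith [k.cast_nonneg (α := ℝ)]

end Real

open Real

def gammaSqPartialSum (a : ℝ) (N : ℕ) : ℝ :=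
  N * (N + 2 * a) * Gamma (N + a) ^ 2 / (Gamma (N + 1) * Gamma (N + 1 + 2 * a))

section

variable {a : ℝ} (ha : 0 < a)
include ha

theorem gammaSqPartialSum_succ_sub (k : ℕ) :
    gammaSqPartialSum a (k + 1) - gammaSqPartialSum a k
      = a ^ 2 * Gamma (k + a) ^ 2 / (Gamma (k + 1) * Gamma (k + 1 + 2 * a)) := by
  have hk₁ : (k : ℝ) + 1 ≠ 0 := by positivity
  have hk₂ : (k : ℝ) + 1 + 2 * a ≠ 0 := by positivity
  have e₁ : Gamma (k + 1 + a) = (k + a) * Gamma (k + a) := by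
    rw [← Gamma_add_one (by positivity)]; ring_nf
  have e₂ : Gamma (k + 1 + 1) = (k + 1) * Gamma (k + 1) := Gamma_add_one hk₁
  have e₃ : Gamma (k + 1 + 1 + 2 * a) = (k + 1 + 2 * a) * Gamma (k + 1 + 2 * a) := by
    rw [← Gamma_add_one hk₂]; ring_nf
  simp only [gammaSqPartialSum, Nat.cast_succ, e₁, e₂, e₃]
  field_simp
  ring

theorem tendsto_gammaSqPartialSum : Tendsto (gammaSqPartialSum a) atTop (𝓝 1) := by
  have h2a : 0 < 2 * a := by positivity
  have h := ((tendsto_Gamma_nat_add_div_mul_rpow (ne_neg_natCast_of_pos ha)).pow 2).div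
    (tendsto_Gamma_nat_add_div_mul_rpow (ne_neg_natCast_of_pos h2a)) one_ne_zero
  rw [one_pow, div_one] at h
  refine h.congr' ?_
  filter_upwards [eventually_ne_atTop 0] with N hN
  simp only [Pi.div_apply]
  have hN' : (0 : ℝ) < N := by positivity
  rw [gammaSqPartialSum, Gamma_add_one hN'.ne', add_right_comm, Gamma_add_one (by positivity),
    two_mul, rpow_add hN', ← two_mul]
  field_simp

theorem hasSum_sq_mul_Gamma_sq_div :
    HasSum (fun k : ℕ => a ^ 2 * Gamma (k + a) ^ 2 / (Gamma (k + 1) * Gamma (k + 1 + 2 * a)))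
      1 := by
  rw [hasSum_iff_tendsto_nat_of_nonneg fun k => ?nonneg]
  case nonneg => positivity
  refine (tendsto_gammaSqPartialSum ha).congr fun N => ?_
  simp only [← gammaSqPartialSum_succ_sub ha]
  rw [sum_range_sub]
  simp [gammaSqPartialSum]

end

theorem hasSum_Gamma_add_half_sq_div_factorial_mul {m : ℕ} (hm : 0 < m) :
    HasSum (fun k : ℕ => ((m : ℝ) ^ 2 / 4) * Gamma ((k : ℝ) + (m : ℝ) / 2) ^ 2
      / ((Nat.factorial k : ℝ) * (Nat.factorial (k + m) : ℝ))) 1 := by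
  convert hasSum_sq_mul_Gamma_sq_div (a := m / 2) (by positivity) using 2 with k
  rw [Gamma_nat_eq_factorial, show (k : ℝ) + 1 + 2 * (m / 2) = ((k + m : ℕ) : ℝ) + 1 by
    push_cast; ring, Gamma_nat_eq_factorial]
  ring

theorem lp.norm_sq_eq_of_hasSum {α : Type*} {E : α → Type*} [∀ i, NormedAddCommGroup (E i)]
    {f : lp E 2} {s : ℝ} (h : HasSum (fun i => ‖f i‖ ^ 2) s) : ‖f‖ ^ 2 = s := by
  have := lp.hasSum_norm (p := 2) (by norm_num) f
  simp only [ENNReal.toReal_ofNat, rpow_two] at this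
  exact this.unique h

/-- For every integer `m > 0`, the vector
`ψ_m = (m/2) Σ_k (Γ(k+m/2)/√(k!(k+m)!)) |k+m⟩⊗|k⟩` is a unit vector; equivalently,
`(m²/4) Σ_k Γ(k+m/2)²/(k!(k+m)!) = 1`. -/
theorem stmt18 (m : ℕ) (hm : 0 < m) (ψ : H2)
    (hψ : ∀ i j : ℕ, (ψ : ∀ _ : ℕ × ℕ, ℂ) (i, j)
      = if i = j + m then
          ((((m : ℝ) / 2) * Real.Gamma ((j : ℝ) + (m : ℝ) / 2)
            / Real.sqrt ((Nat.factorial j : ℝ) * (Nat.factorial (j + m) : ℝ)) : ℝ) : ℂ)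
        else 0) :
    ‖ψ‖ = 1 ∧
    HasSum
      (fun k : ℕ => ((m : ℝ) ^ 2 / 4) * (Real.Gamma ((k : ℝ) + (m : ℝ) / 2)) ^ 2
        / ((Nat.factorial k : ℝ) * (Nat.factorial (k + m) : ℝ)))
      1 := by
  have hsum := hasSum_Gamma_add_half_sq_div_factorial_mul hm
  refine ⟨?_, hsum⟩
  have hdiag : Function.Injective fun k : ℕ => (k + m, k) := fun a b h => (Prod.ext_iff.mp h).2
  have hoff : ∀ p ∉ Set.range fun k : ℕ => (k + m, k), ‖ψ p‖ ^ 2 = 0 := by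
    rintro ⟨i, j⟩ hp
    rw [hψ, if_neg fun h => hp ⟨j, by rw [h]⟩, norm_zero, sq, zero_mul]
  have hsq : HasSum (fun p => ‖ψ p‖ ^ 2) 1 := by
    rw [← hdiag.hasSum_iff hoff]
    refine hsum.congr_fun fun k => ?_
    have hfact : (0 : ℝ) ≤ (k.factorial : ℝ) * ((k + m).factorial : ℝ) := by positivity
    simp only [Function.comp_apply, hψ, if_pos, Complex.norm_real, norm_eq_abs, sq_abs, div_pow,
      mul_pow, sq_sqrt hfact]
    ring
  exact (pow_eq_one_iff_of_nonneg (norm_nonneg ψ) two_ne_zero).mp (lp.norm_sq_eq_of_hasSum hsq)
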